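/- Let G be a connected graph of order n ≥ 2 and H a graph of order at least 2. Then L₂(G∘H) ≥ 2ρ(G), where ρ(G) is the packing number of G and G∘H is the lexicographic product. -/

import Mathlib

open SimpleGraph

/-- The closed neighborhood `N[v]` of a vertex. -/
def closedNbhd {V : Type*} (G : SimpleGraph V) (v : V) : Set V :=
  insert v (G.neighborSet v)

/-- `B` is a `k`-limited packing: every closed neighborhood contains at most `k` vertices of `B`. -/
def IsLimitedPacking {V : Type*} (G : SimpleGraph V) (k : ℕ) (B : Set V) : Prop :=
  ∀ v : V, (B ∩ closedNbhd G v).ncard ≤ k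

/-- The `2`-limited packing number `L₂(G)`: maximum size of a `2`-limited packing. -/
noncomputable def L2 {V : Type*} (G : SimpleGraph V) : ℕ :=
  sSup {n | ∃ B : Set V, IsLimitedPacking G 2 B ∧ B.ncard = n}

/-- The lexicographic product `G ∘ H` of two simple graphs. -/
def lexProd {V W : Type*} (G : SimpleGraph V) (H : SimpleGraph W) : SimpleGraph (V × W) where
  Adj x y := G.Adj x.1 y.1 ∨ (x.1 = y.1 ∧ H.Adj x.2 y.2)
  symm := by
    constructor
    rintro ⟨a, b⟩ ⟨c, d⟩ (h | ⟨h1, h2⟩)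
    · exact Or.inl h.symm
    · exact Or.inr ⟨h1.symm, h2.symm⟩
  loopless := by
    constructor
    rintro ⟨a, b⟩ (h | ⟨h1, h2⟩)
    · exact G.loopless.irrefl a h
    · exact H.loopless.irrefl b h2

/-- `P` is a packing: pairwise disjoint closed neighborhoods. -/
def IsPacking {V : Type*} (G : SimpleGraph V) (P : Set V) : Prop :=
  ∀ u ∈ P, ∀ v ∈ P, u ≠ v → closedNbhd G u ∩ closedNbhd G v = ∅

/-- The packing number `ρ(G)`. -/
noncomputable def packingNumber {V : Type*} (G : SimpleGraph V) : ℕ :=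
  sSup {n | ∃ P : Set V, IsPacking G P ∧ P.ncard = n}

/-! Every closed neighbourhood of `G` meets a packing `P` of `G` in at most one vertex.
A closed neighbourhood of `(v, w)` in `G ∘ H` projects into `N[v]`, so it meets `P × S`
inside a single fibre `{p} × S`. Taking for `S` two vertices of `H` gives a `2`-limited
packing of `G ∘ H` of size `2ρ(G)`. -/

section ClosedNbhd

variable {V : Type*} {G : SimpleGraph V} {u v : V}

theorem mem_closedNbhd_iff : u ∈ closedNbhd G v ↔ u = v ∨ G.Adj v u := Iff.rfl

theorem mem_closedNbhd_comm : u ∈ closedNbhd G v ↔ v ∈ closedNbhd G u := by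
  simp only [mem_closedNbhd_iff, eq_comm, G.adj_comm]

theorem IsPacking.eq_of_mem_closedNbhd {P : Set V} {p q : V} (hP : IsPacking G P)
    (hp : p ∈ P) (hq : q ∈ P) (hpv : p ∈ closedNbhd G v) (hqv : q ∈ closedNbhd G v) :
    p = q := by
  by_contra hpq
  have hv : v ∈ closedNbhd G p ∩ closedNbhd G q :=
    ⟨mem_closedNbhd_comm.mp hpv, mem_closedNbhd_comm.mp hqv⟩
  rw [hP p hp q hq hpq] at hv
  exact hv

end ClosedNbhd

theorem fst_mem_closedNbhd_of_mem_closedNbhd_lexProd {V W : Type*} {G : SimpleGraph V}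
    {H : SimpleGraph W} {x y : V × W} (h : x ∈ closedNbhd (lexProd G H) y) :
    x.1 ∈ closedNbhd G y.1 := by
  rcases h with rfl | hadj | ⟨heq, -⟩
  · exact Set.mem_insert _ _
  · exact Or.inr hadj
  · exact Or.inl heq.symm

theorem IsPacking.isLimitedPacking_lexProd {V W : Type*} {G : SimpleGraph V}
    (H : SimpleGraph W) {P : Set V} {S : Set W} {k : ℕ} (hP : IsPacking G P)
    (hS : S.Finite) (hSk : S.ncard ≤ k) : IsLimitedPacking (lexProd G H) k (P ×ˢ S) := by
  intro y
  rcases (P ×ˢ S ∩ closedNbhd (lexProd G H) y).eq_empty_or_nonempty with hempty | ⟨x, hxB, hxN⟩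
  · simp [hempty]
  have hfibre : P ×ˢ S ∩ closedNbhd (lexProd G H) y ⊆ {x.1} ×ˢ S := by
    rintro z ⟨hzB, hzN⟩
    exact ⟨hP.eq_of_mem_closedNbhd hzB.1 hxB.1
      (fst_mem_closedNbhd_of_mem_closedNbhd_lexProd hzN)
      (fst_mem_closedNbhd_of_mem_closedNbhd_lexProd hxN), hzB.2⟩
  calc (P ×ˢ S ∩ closedNbhd (lexProd G H) y).ncard
      ≤ ({x.1} ×ˢ S).ncard := Set.ncard_le_ncard hfibre ((Set.finite_singleton _).prod hS)
    _ = S.ncard := by rw [Set.ncard_prod, Set.ncard_singleton, one_mul]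
    _ ≤ k := hSk

section Finite

variable {V : Type*} [Finite V] (G : SimpleGraph V)

theorem exists_isPacking_ncard_eq_packingNumber :
    ∃ P : Set V, IsPacking G P ∧ P.ncard = packingNumber G :=
  Nat.sSup_mem (s := {n | ∃ P : Set V, IsPacking G P ∧ P.ncard = n})
    ⟨0, ∅, fun _ h => absurd h (Set.notMem_empty _), Set.ncard_empty V⟩
    ⟨Nat.card V, by rintro n ⟨P, -, rfl⟩; exact Set.ncard_le_card P⟩

theorem IsLimitedPacking.ncard_le_L2 {B : Set V} (hB : IsLimitedPacking G 2 B) :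
    B.ncard ≤ L2 G :=
  le_csSup ⟨Nat.card V, by rintro n ⟨B', -, rfl⟩; exact Set.ncard_le_card B'⟩ ⟨B, hB, rfl⟩

end Finite

theorem L2_lexProd_ge_general {V W : Type*} [Fintype V] [Fintype W]
    (G : SimpleGraph V) (H : SimpleGraph W)
    (hH : 2 ≤ Fintype.card W) :
    2 * packingNumber G ≤ L2 (lexProd G H) := by
  obtain ⟨P, hP, hPcard⟩ := exists_isPacking_ncard_eq_packingNumber G
  obtain ⟨w₁, w₂, hw⟩ := Fintype.exists_pair_of_one_lt_card hH
  calc 2 * packingNumber G = (P ×ˢ ({w₁, w₂} : Set W)).ncard := by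
        rw [Set.ncard_prod, Set.ncard_pair hw, hPcard, mul_comm]
    _ ≤ L2 (lexProd G H) :=
        IsLimitedPacking.ncard_le_L2 _
          (hP.isLimitedPacking_lexProd H (Set.toFinite _) (Set.ncard_pair hw).le)

/-- For a connected graph `G` of order `n ≥ 2` and a graph `H` of order at least `2`,
`L₂(G ∘ H) ≥ 2ρ(G)`. -/
theorem L2_lexProd_ge {V W : Type*} [Fintype V] [Fintype W]
    (G : SimpleGraph V) (H : SimpleGraph W)
    (hG : G.Connected) (hn : 2 ≤ Fintype.card V) (hH : 2 ≤ Fintype.card W) :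
    2 * packingNumber G ≤ L2 (lexProd G H) :=
  L2_lexProd_ge_general G H hH
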